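/- arXiv:2108.11241 — 4 statements merged into one kernel-verified Lean document; each statement's English description precedes it below -/
import Mathlib

section
/- Let A be an integral domain with field of fractions F. The map sending the class of a unimodular row (a,b) to the point a/b of the projective line P¹(F) is a well-defined injection from the vertex set of Γ(A) into P¹(F), and its image is exactly the set of Bézout points, i.e. those points of P¹(F) of the form a/b where (a,b) ∈ A² is nonzero and the ideal generated by a and b is principal. -/
open Matrix

/-- A row `(a,b) ∈ A²` is unimodular if `∃ r s, r*a + s*b = 1`. -/
def IsUnimod {A : Type*} [CommRing A] (v : Fin 2 → A) : Prop :=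
  ∃ r s : A, r * v 0 + s * v 1 = 1

/-- Unimodular rows of length 2. -/
abbrev UnimodRow (A : Type*) [CommRing A] := {v : Fin 2 → A // IsUnimod v}

/-- Two unimodular rows are equivalent if they differ by multiplication by a unit. -/
instance vertexSetoid (A : Type*) [CommRing A] : Setoid (UnimodRow A) where
  r v w := ∃ u : Aˣ, (u : A) • v.1 = w.1
  iseqv := by
    refine ⟨fun v => ⟨1, by simp⟩, ?_, ?_⟩
    · rintro v w ⟨u, h⟩
      exact ⟨u⁻¹, by rw [← h, smul_smul, Units.inv_mul, one_smul]⟩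
    · rintro v w z ⟨u, h⟩ ⟨u', h'⟩
      exact ⟨u' * u, by rw [← h', ← h, smul_smul, ← Units.val_mul]⟩

/-- The vertices of the graph Γ(A): unimodular rows up to multiplication by a unit. -/
def Vertex (A : Type*) [CommRing A] := Quotient (vertexSetoid A)

/-- The graph Γ(A). -/
def GammaGraph (A : Type*) [CommRing A] : SimpleGraph (Vertex A) where
  Adj x y := x ≠ y ∧ ∃ v w : UnimodRow A, x = ⟦v⟧ ∧ y = ⟦w⟧ ∧
    IsUnit (v.1 0 * w.1 1 - v.1 1 * w.1 0)
  symm := ⟨by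
    rintro x y ⟨hne, v, w, hx, hy, hd⟩
    refine ⟨hne.symm, w, v, hy, hx, ?_⟩
    have h : w.1 0 * v.1 1 - w.1 1 * v.1 0 = -(v.1 0 * w.1 1 - v.1 1 * w.1 0) := by ring
    rw [h]
    exact hd.neg⟩
  loopless := ⟨fun x h => h.1 rfl⟩

theorem isUnimod_vecMul {A : Type*} [CommRing A] {v : Fin 2 → A} (h : IsUnimod v)
    (M : GL (Fin 2) A) : IsUnimod (vecMul v (M : Matrix (Fin 2) (Fin 2) A)) := by
  obtain ⟨r, s, hrs⟩ := h
  set w : Fin 2 → A := ((M⁻¹ : GL (Fin 2) A) : Matrix (Fin 2) (Fin 2) A) *ᵥ ![r, s] with hw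
  refine ⟨w 0, w 1, ?_⟩
  have h1 : vecMul v (M : Matrix (Fin 2) (Fin 2) A) ⬝ᵥ w = v ⬝ᵥ ![r, s] := by
    rw [hw, ← dotProduct_mulVec, mulVec_mulVec, Units.mul_inv, one_mulVec]
  simp only [dotProduct, Fin.sum_univ_two] at h1
  simp only [Matrix.cons_val_zero, Matrix.cons_val_one, Matrix.head_cons] at h1
  linear_combination h1 + hrs

/-- The right action of GL₂(A) on the vertices of Γ(A). -/
def vertexMul {A : Type*} [CommRing A] (x : Vertex A) (M : GL (Fin 2) A) : Vertex A :=
  Quotient.map (fun v => ⟨vecMul v.1 (M : Matrix (Fin 2) (Fin 2) A), isUnimod_vecMul v.2 M⟩)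
    (by
      rintro v w ⟨u, h⟩
      refine ⟨u, ?_⟩
      show (u : A) • (vecMul v.1 (M : Matrix (Fin 2) (Fin 2) A)) =
        vecMul w.1 (M : Matrix (Fin 2) (Fin 2) A)
      rw [← h, Matrix.smul_vecMul]) x

/-- The vertex ∞ = [(1,0)]. -/
def vInf (A : Type*) [CommRing A] : Vertex A := ⟦⟨![1, 0], ⟨1, 0, by norm_num⟩⟩⟧

/-- The vertex 0 = [(0,1)]. -/
def vZero (A : Type*) [CommRing A] : Vertex A := ⟦⟨![0, 1], ⟨0, 1, by norm_num⟩⟩⟧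

/-- The vertex 1 = [(1,1)]. -/
def vOne (A : Type*) [CommRing A] : Vertex A := ⟦⟨![1, 1], ⟨1, 0, by norm_num⟩⟩⟧

/-- A point of P¹(F) is an (A-)Bézout point if it is of the form a/b = [a : b] for some
nonzero pair (a,b) ∈ A² generating a principal ideal. -/
def IsBezoutPoint (A : Type*) (F : Type*) [CommRing A] [Field F] [Algebra A F]
    (x : Projectivization F (Fin 2 → F)) : Prop :=
  ∃ a b : A, ¬(a = 0 ∧ b = 0) ∧ (Ideal.span {a, b} : Ideal A).IsPrincipal ∧
    ∃ hv : (![algebraMap A F a, algebraMap A F b] : Fin 2 → F) ≠ 0,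
      x = Projectivization.mk F ![algebraMap A F a, algebraMap A F b] hv

/-!
A unimodular row `v`, say `r v₀ + s v₁ = 1`, is determined up to a unit by its point in
`P¹(F)`: if `v₀ w₁ = v₁ w₀`, then `w = t v` with `t = r w₀ + s w₁`, and symmetrically
`v = t' w`, which forces `t' t = 1`. A nonzero pair `(a, b)` generating a principal ideal `(d)`
is `d` times the unimodular row `(a / d, b / d)`, so the Bézout points are exactly the points
of unimodular rows.
-/

open scoped LinearAlgebra.Projectivization

namespace IsUnimod

variable {A : Type*} [CommRing A] {v w : Fin 2 → A}

theorem ne_zero [Nontrivial A] (hv : IsUnimod v) : v ≠ 0 := by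
  rintro rfl
  obtain ⟨r, s, h⟩ := hv
  simp at h

theorem span_pair_eq_top (hv : IsUnimod v) : Ideal.span {v 0, v 1} = ⊤ := by
  obtain ⟨r, s, h⟩ := hv
  exact (Ideal.eq_top_iff_one _).2 (Ideal.mem_span_pair.2 ⟨r, s, h⟩)

theorem eq_one_of_smul_eq (hv : IsUnimod v) {c : A} (h : c • v = v) : c = 1 := by
  obtain ⟨r, s, hrs⟩ := hv
  have h0 : c * v 0 = v 0 := congrFun h 0
  have h1 : c * v 1 = v 1 := congrFun h 1
  linear_combination r * h0 + s * h1 - (c - 1) * hrs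

theorem exists_smul_eq_of_mul_eq_mul (hv : IsUnimod v) (h : v 0 * w 1 = v 1 * w 0) :
    ∃ t : A, t • v = w := by
  obtain ⟨r, s, hrs⟩ := hv
  refine ⟨r * w 0 + s * w 1, funext fun i => ?_⟩
  fin_cases i
  · show (r * w 0 + s * w 1) * v 0 = w 0
    linear_combination s * h + w 0 * hrs
  · show (r * w 0 + s * w 1) * v 1 = w 1
    linear_combination (-r) * h + w 1 * hrs

theorem exists_unit_smul_eq_of_mul_eq_mul (hv : IsUnimod v) (hw : IsUnimod w)
    (h : v 0 * w 1 = v 1 * w 0) : ∃ u : Aˣ, (u : A) • v = w := by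
  obtain ⟨t, rfl⟩ := hv.exists_smul_eq_of_mul_eq_mul h
  obtain ⟨t', ht'⟩ := hw.exists_smul_eq_of_mul_eq_mul (v := t • v) (w := v) (by
    simp only [Pi.smul_apply, smul_eq_mul]
    ring)
  have htt' : t * t' = 1 := by
    rw [mul_comm]
    exact hv.eq_one_of_smul_eq (by rwa [← smul_smul])
  exact ⟨⟨t, t', htt', by rwa [mul_comm]⟩, rfl⟩

end IsUnimod

theorem exists_isUnimod_smul_eq_of_isPrincipal {A : Type*} [CommRing A] [IsDomain A] {a b : A}
    (hab : ¬(a = 0 ∧ b = 0)) (h : (Ideal.span {a, b} : Ideal A).IsPrincipal) :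
    ∃ (d : A) (v : Fin 2 → A), IsUnimod v ∧ d • v = ![a, b] := by
  obtain ⟨d, hd⟩ := h
  have hd' : Ideal.span {a, b} = Ideal.span {d} := hd
  have hdvd : ∀ x ∈ ({a, b} : Set A), d ∣ x := fun x hx =>
    Ideal.mem_span_singleton.1 (hd' ▸ Ideal.subset_span hx)
  obtain ⟨a', rfl⟩ := hdvd a (by simp)
  obtain ⟨b', rfl⟩ := hdvd b (by simp)
  have hd0 : d ≠ 0 := by
    rintro rfl
    simp at hab
  obtain ⟨x, y, hxy⟩ := Ideal.mem_span_pair.1 (hd' ▸ Ideal.mem_span_singleton_self d)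
  refine ⟨d, ![a', b'], ⟨x, y, mul_left_cancel₀ hd0 ?_⟩, ?_⟩
  · simp only [Matrix.cons_val_zero, Matrix.cons_val_one]
    linear_combination hxy
  · ext i
    fin_cases i <;> rfl

section Projective

variable {A : Type*} [CommRing A] (F : Type*) [Field F] [Algebra A F]

def mapRow (v : Fin 2 → A) : Fin 2 → F := ![algebraMap A F (v 0), algebraMap A F (v 1)]

theorem mapRow_smul (c : A) (v : Fin 2 → A) :
    mapRow F (c • v) = algebraMap A F c • mapRow F v := by
  ext i
  fin_cases i <;> simp [mapRow]

theorem IsUnimod.mapRow {v : Fin 2 → A} (hv : IsUnimod v) : IsUnimod (mapRow F v) := by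
  obtain ⟨r, s, h⟩ := hv
  refine ⟨algebraMap A F r, algebraMap A F s, ?_⟩
  show algebraMap A F r * algebraMap A F (v 0) + algebraMap A F s * algebraMap A F (v 1) = 1
  rw [← map_mul, ← map_mul, ← map_add, h, map_one]

theorem mapRow_ne_zero {v : Fin 2 → A} (hv : IsUnimod v) : mapRow F v ≠ 0 :=
  (hv.mapRow F).ne_zero

theorem mul_eq_mul_of_mk_mapRow_eq [FaithfulSMul A F] {v w : Fin 2 → A} (hv : IsUnimod v)
    (hw : IsUnimod w)
    (h : Projectivization.mk F (mapRow F v) (mapRow_ne_zero F hv) =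
      Projectivization.mk F (mapRow F w) (mapRow_ne_zero F hw)) :
    v 0 * w 1 = v 1 * w 0 := by
  obtain ⟨c, hc⟩ := (Projectivization.mk_eq_mk_iff' F _ _ _ _).1 h
  have h0 : c * algebraMap A F (w 0) = algebraMap A F (v 0) := congrFun hc 0
  have h1 : c * algebraMap A F (w 1) = algebraMap A F (v 1) := congrFun hc 1
  apply FaithfulSMul.algebraMap_injective A F
  simp only [map_mul, ← h0, ← h1]
  ring

end Projective

namespace Vertex

variable (A : Type*) [CommRing A] (F : Type*) [Field F] [Algebra A F]

noncomputable def toProjectivization : Vertex A → ℙ F (Fin 2 → F) :=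
  Quotient.lift
    (fun v : UnimodRow A => Projectivization.mk F (mapRow F v.1) (mapRow_ne_zero F v.2)) (by
    rintro v w ⟨u, h⟩
    exact ((Projectivization.mk_eq_mk_iff' F _ _ _ _).2
      ⟨algebraMap A F u, by rw [← mapRow_smul, h]⟩).symm)

theorem toProjectivization_injective [FaithfulSMul A F] :
    Function.Injective (toProjectivization A F) := by
  rintro ⟨v⟩ ⟨w⟩ h
  exact Quotient.sound
    (v.2.exists_unit_smul_eq_of_mul_eq_mul w.2 (mul_eq_mul_of_mk_mapRow_eq F v.2 w.2 h))

theorem range_toProjectivization [IsDomain A] [FaithfulSMul A F] :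
    Set.range (toProjectivization A F) = {x | IsBezoutPoint A F x} := by
  ext x
  constructor
  · rintro ⟨⟨v⟩, rfl⟩
    refine ⟨v.1 0, v.1 1, fun h => v.2.ne_zero ?_, ?_, mapRow_ne_zero F v.2, rfl⟩
    · ext i
      fin_cases i
      exacts [h.1, h.2]
    · rw [v.2.span_pair_eq_top]
      exact ⟨1, Ideal.span_singleton_one.symm⟩
  · rintro ⟨a, b, hab, hprin, hne, rfl⟩
    obtain ⟨d, v, hv, hdv⟩ := exists_isUnimod_smul_eq_of_isPrincipal hab hprin
    refine ⟨⟦⟨v, hv⟩⟧, ((Projectivization.mk_eq_mk_iff' F _ _ _ _).2 ?_).symm⟩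
    exact ⟨algebraMap A F d, by rw [← mapRow_smul, hdv]; rfl⟩

end Vertex

/-- Let A be an integral domain with field of fractions F.  The map sending
the class of a unimodular row (a,b) to a/b ∈ P¹(F) is a well-defined injection from the
vertex set of Γ(A) into P¹(F), whose image is exactly the set of Bézout points. -/
theorem stmt0 (A : Type*) [CommRing A] [IsDomain A] (F : Type*) [Field F] [Algebra A F]
    [IsFractionRing A F] :
    ∃ f : Vertex A → Projectivization F (Fin 2 → F),
      (∀ v : UnimodRow A,
        ∃ hv : (![algebraMap A F (v.1 0), algebraMap A F (v.1 1)] : Fin 2 → F) ≠ 0,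
          f ⟦v⟧ = Projectivization.mk F ![algebraMap A F (v.1 0), algebraMap A F (v.1 1)] hv) ∧
      Function.Injective f ∧
      Set.range f = {x | IsBezoutPoint A F x} :=
  ⟨Vertex.toProjectivization A F, fun v => ⟨mapRow_ne_zero F v.2, rfl⟩,
    Vertex.toProjectivization_injective A F, Vertex.range_toProjectivization A F⟩
end

section
/- Let A be a commutative ring. Then GL₂(A) acts transitively on the right on the set of ordered 3-cliques of Γ(A), i.e. ordered triples of pairwise adjacent vertices, and the stabilizer of the ordered 3-clique (∞, 0, 1) is the group of invertible scalar matrices in GL₂(A). -/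
open Matrix

/-! If `v, w, t` represent pairwise adjacent vertices, Cramer's rule gives
`det(v,w) • t = det(t,w) • v + det(v,t) • w` with all three coefficients units, so the matrix with
rows `det(t,w) • v` and `det(v,t) • w` is invertible and sends `(∞, 0, 1)` to `([v], [w], [t])`;
any two triangles are then related through `(∞, 0, 1)`. A matrix fixing `∞` and `0` is diagonal,
and fixing `1` forces its two diagonal entries to agree. -/

section

variable {A : Type*} [CommRing A]

theorem vertexMul_mk_eq_mk_iff {v w : UnimodRow A} {M : GL (Fin 2) A} :
    vertexMul ⟦v⟧ M = ⟦w⟧ ↔ ∃ u : Aˣ, (u : A) • w.1 = v.1 ᵥ* (M : Matrix (Fin 2) (Fin 2) A) :=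
  eq_comm.trans Quotient.eq

theorem vertexMul_vertexMul (x : Vertex A) (M N : GL (Fin 2) A) :
    vertexMul (vertexMul x M) N = vertexMul x (M * N) := by
  induction x using Quotient.inductionOn with
  | h v => exact Quotient.sound ⟨1, by simp [vecMul_vecMul]⟩

theorem vertexMul_eq_self_of_eq_smul_one {M : GL (Fin 2) A} {c : Aˣ}
    (hM : (M : Matrix (Fin 2) (Fin 2) A) = (c : A) • (1 : Matrix (Fin 2) (Fin 2) A))
    (x : Vertex A) : vertexMul x M = x := by
  induction x using Quotient.inductionOn with
  | h v => exact vertexMul_mk_eq_mk_iff.2 ⟨c, by rw [hM, vecMul_smul, vecMul_one]⟩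

theorem isUnit_det_of_adj {v w : UnimodRow A} (h : (GammaGraph A).Adj ⟦v⟧ ⟦w⟧) :
    IsUnit (v.1 0 * w.1 1 - v.1 1 * w.1 0) := by
  obtain ⟨-, v', w', hv, hw, hd⟩ := h
  obtain ⟨u, hu⟩ := Quotient.exact hv
  obtain ⟨u', hu'⟩ := Quotient.exact hw
  have hscale : v'.1 0 * w'.1 1 - v'.1 1 * w'.1 0 =
      ((u * u' : Aˣ) : A) * (v.1 0 * w.1 1 - v.1 1 * w.1 0) := by
    rw [← hu, ← hu']
    simp only [Pi.smul_apply, smul_eq_mul, Units.val_mul]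
    ring
  rwa [hscale, Units.isUnit_units_mul] at hd

theorem exists_vertexMul_vInf_vZero_vOne_eq_of_adj {x y z : Vertex A}
    (hxy : (GammaGraph A).Adj x y) (hxz : (GammaGraph A).Adj x z) (hyz : (GammaGraph A).Adj y z) :
    ∃ N : GL (Fin 2) A, vertexMul (vInf A) N = x ∧ vertexMul (vZero A) N = y ∧
      vertexMul (vOne A) N = z := by
  induction x using Quotient.inductionOn with | h v =>
  induction y using Quotient.inductionOn with | h w =>
  induction z using Quotient.inductionOn with | h t =>
  set a := t.1 0 * w.1 1 - t.1 1 * w.1 0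
  set b := v.1 0 * t.1 1 - v.1 1 * t.1 0
  have hvw := isUnit_det_of_adj hxy
  have hb : IsUnit b := isUnit_det_of_adj hxz
  have ha : IsUnit a := by
    convert (isUnit_det_of_adj hyz).neg using 1
    ring
  have cramer : (v.1 0 * w.1 1 - v.1 1 * w.1 0) • t.1 = a • v.1 + b • w.1 := by
    ext i
    fin_cases i <;>
      simp only [Fin.zero_eta, Fin.mk_one, Pi.smul_apply, Pi.add_apply, smul_eq_mul, a, b] <;> ring
  have hdet : IsUnit (Matrix.of ![a • v.1, b • w.1]).det := by
    rw [det_fin_two]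
    convert (ha.mul hb).mul hvw using 1
    simp only [of_apply, cons_val_zero, cons_val_one, cons_val_fin_one, Pi.smul_apply, smul_eq_mul]
    ring
  refine ⟨GeneralLinearGroup.mk'' _ hdet, ?_, ?_, ?_⟩ <;>
    simp only [vInf, vZero, vOne, vertexMul_mk_eq_mk_iff, GeneralLinearGroup.val_mk'']
  · exact ⟨ha.unit, by simp⟩
  · exact ⟨hb.unit, by simp⟩
  · exact ⟨hvw.unit, by simpa using cramer⟩

theorem eq_smul_one_of_fixes_vInf_vZero_vOne {M : GL (Fin 2) A}
    (hInf : vertexMul (vInf A) M = vInf A) (hZero : vertexMul (vZero A) M = vZero A)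
    (hOne : vertexMul (vOne A) M = vOne A) :
    ∃ c : Aˣ, (M : Matrix (Fin 2) (Fin 2) A) = (c : A) • (1 : Matrix (Fin 2) (Fin 2) A) := by
  obtain ⟨u, hu⟩ := vertexMul_mk_eq_mk_iff.1 hInf
  obtain ⟨u', hu'⟩ := vertexMul_mk_eq_mk_iff.1 hZero
  obtain ⟨c, hc⟩ := vertexMul_mk_eq_mk_iff.1 hOne
  have h01 := congrFun hu 1
  have h10 := congrFun hu' 0
  have h00 := congrFun hc 0
  have h11 := congrFun hc 1
  simp only [vecMul, dotProduct, Fin.sum_univ_two, Pi.smul_apply, smul_eq_mul, cons_val_zero,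
    cons_val_one, cons_val_fin_one, mul_zero, mul_one, zero_mul, one_mul, add_zero, zero_add]
    at h01 h10 h00 h11
  refine ⟨c, ?_⟩
  ext i j
  fin_cases i <;> fin_cases j <;> simp <;> grind

end

/-- GL₂(A) acts transitively on ordered 3-cliques of Γ(A), and the stabilizer
of the ordered 3-clique (∞, 0, 1) is the group of invertible scalar matrices. -/
theorem stmt2 (A : Type*) [CommRing A] :
    (∀ x y z x' y' z' : Vertex A,
      (GammaGraph A).Adj x y → (GammaGraph A).Adj x z → (GammaGraph A).Adj y z →
      (GammaGraph A).Adj x' y' → (GammaGraph A).Adj x' z' → (GammaGraph A).Adj y' z' →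
      ∃ M : GL (Fin 2) A,
        vertexMul x M = x' ∧ vertexMul y M = y' ∧ vertexMul z M = z') ∧
    (∀ M : GL (Fin 2) A,
      (vertexMul (vInf A) M = vInf A ∧ vertexMul (vZero A) M = vZero A ∧
        vertexMul (vOne A) M = vOne A) ↔
      ∃ u : Aˣ, (M : Matrix (Fin 2) (Fin 2) A) = (u : A) • (1 : Matrix (Fin 2) (Fin 2) A)) := by
  refine ⟨fun x y z x' y' z' hxy hxz hyz hxy' hxz' hyz' => ?_, fun M => ⟨?_, ?_⟩⟩
  · obtain ⟨N, rfl, rfl, rfl⟩ := exists_vertexMul_vInf_vZero_vOne_eq_of_adj hxy hxz hyz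
    obtain ⟨N', rfl, rfl, rfl⟩ := exists_vertexMul_vInf_vZero_vOne_eq_of_adj hxy' hxz' hyz'
    refine ⟨N⁻¹ * N', ?_, ?_, ?_⟩ <;> rw [vertexMul_vertexMul, mul_inv_cancel_left]
  · rintro ⟨hInf, hZero, hOne⟩
    exact eq_smul_one_of_fixes_vInf_vZero_vOne hInf hZero hOne
  · rintro ⟨u, hM⟩
    exact ⟨vertexMul_eq_self_of_eq_smul_one hM _, vertexMul_eq_self_of_eq_smul_one hM _,
      vertexMul_eq_self_of_eq_smul_one hM _⟩
end

section
/- Let A be a commutative ring and let a, b ∈ A² be unimodular rows whose classes [a], [b] form an edge of Γ(A). Then the map from the unit group A^× to the set of vertices [c] such that {[a],[b],[c]} is a 3-clique of Γ(A), given by u ↦ [a + ub] (the class of the row a + ub), is a bijection. -/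
open Matrix

/-!
Put `det2 v w = v 0 * w 1 - v 1 * w 0`; adjacency in Γ(A) means that `det2` of representatives is
a unit, and `δ = det2 a b` is one. Cramer's rule `δ • c = det2 c b • a + det2 a c • b` shows that
when `[c]` is adjacent to both `[a]` and `[b]`, both coefficients are units, so `[c] = [a + u • b]`
for a unit `u`; conversely `det2 a (a + u • b) = u * δ` and `det2 b (a + u • b) = -δ`. If
`w • (a + u • b) = a + u' • b`, applying `det2 b` forces `w = 1` and then `det2 a` gives `u = u'`.
-/

def det2 {A : Type*} [CommRing A] (v w : Fin 2 → A) : A :=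
  v 0 * w 1 - v 1 * w 0

section Det2

variable {A : Type*} [CommRing A]

@[simp]
lemma det2_self (v : Fin 2 → A) : det2 v v = 0 := by
  simp only [det2]; ring

lemma det2_swap (v w : Fin 2 → A) : det2 w v = -det2 v w := by
  simp only [det2]; ring

@[simp]
lemma det2_smul_left (x : A) (v w : Fin 2 → A) : det2 (x • v) w = x * det2 v w := by
  simp only [det2, Pi.smul_apply, smul_eq_mul]; ring

@[simp]
lemma det2_smul_right (x : A) (v w : Fin 2 → A) : det2 v (x • w) = x * det2 v w := by
  simp only [det2, Pi.smul_apply, smul_eq_mul]; ring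

@[simp]
lemma det2_add_right (v w w' : Fin 2 → A) : det2 v (w + w') = det2 v w + det2 v w' := by
  simp only [det2, Pi.add_apply]; ring

lemma det2_smul_eq_add (a b c : Fin 2 → A) :
    det2 a b • c = det2 c b • a + det2 a c • b := by
  funext i
  fin_cases i <;> simp [det2] <;> ring

lemma det2_add_smul_left (a b : Fin 2 → A) (u : A) : det2 a (a + u • b) = u * det2 a b := by
  simp

lemma det2_add_smul_right (a b : Fin 2 → A) (u : A) : det2 b (a + u • b) = det2 b a := by
  simp

lemma IsUnimod.of_isUnit_det2 {v w : Fin 2 → A} (h : IsUnit (det2 v w)) : IsUnimod w := by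
  obtain ⟨δ, hδ⟩ := h
  unfold det2 at hδ
  refine ⟨-(↑δ⁻¹ * v 1), ↑δ⁻¹ * v 0, ?_⟩
  linear_combination (↑δ⁻¹ : A) * hδ.symm + δ.inv_mul

end Det2

section Gamma

variable {A : Type*} [CommRing A]

lemma GammaGraph.nontrivial_of_adj {x y : Vertex A} (h : (GammaGraph A).Adj x y) :
    Nontrivial A := by
  by_contra hA
  rw [not_nontrivial_iff_subsingleton] at hA
  obtain ⟨hne, v, w, rfl, rfl, -⟩ := h
  exact hne (Quotient.sound ⟨1, Subsingleton.elim _ _⟩)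

lemma GammaGraph.isUnit_det2_of_adj {v w : UnimodRow A}
    (h : (GammaGraph A).Adj ⟦v⟧ ⟦w⟧) : IsUnit (det2 v.1 w.1) := by
  obtain ⟨-, v', w', hv, hw, hdet⟩ := h
  obtain ⟨x, hx⟩ := Quotient.exact hv
  obtain ⟨y, hy⟩ := Quotient.exact hw
  change IsUnit (det2 v'.1 w'.1) at hdet
  rw [← hx, ← hy, det2_smul_left, det2_smul_right, ← mul_assoc] at hdet
  exact isUnit_of_mul_isUnit_right hdet

lemma GammaGraph.adj_of_isUnit_det2 [Nontrivial A] {v w : UnimodRow A}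
    (h : IsUnit (det2 v.1 w.1)) : (GammaGraph A).Adj ⟦v⟧ ⟦w⟧ := by
  refine ⟨fun hvw => ?_, v, w, rfl, rfl, h⟩
  obtain ⟨x, hx⟩ := Quotient.exact hvw
  rw [← hx, det2_smul_right, det2_self, mul_zero] at h
  exact not_isUnit_zero h

end Gamma

section Clique

variable {A : Type*} [CommRing A] {a b : Fin 2 → A}

lemma eq_of_smul_add_smul_eq (hab : IsUnit (det2 a b)) {u u' : A} {w : A}
    (h : w • (a + u • b) = a + u' • b) : u = u' := by
  have hba : IsUnit (det2 b a) := by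
    rw [det2_swap]
    exact hab.neg
  have hw : w = 1 := by
    have := congrArg (det2 b) h
    rw [det2_smul_right, det2_add_smul_right, det2_add_smul_right] at this
    exact hba.mul_eq_right.mp this
  have := congrArg (det2 a) h
  rw [hw, one_smul, det2_add_smul_left, det2_add_smul_left] at this
  exact hab.mul_right_cancel this

lemma exists_smul_eq_add_smul (hab : IsUnit (det2 a b)) {c : Fin 2 → A}
    (hac : IsUnit (det2 a c)) (hbc : IsUnit (det2 b c)) :
    ∃ u w : Aˣ, (w : A) • c = a + (u : A) • b := by
  obtain ⟨δ, hδ⟩ := hab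
  obtain ⟨e, he⟩ := hac
  obtain ⟨f, hf⟩ := hbc
  refine ⟨-(e * f⁻¹), -(δ * f⁻¹), ?_⟩
  have hc := det2_smul_eq_add a b c
  rw [det2_swap b c, ← hδ, ← he, ← hf] at hc
  simp only [Units.val_neg, Units.val_mul]
  linear_combination (norm := module) (-(↑f⁻¹ : A)) • hc + f.inv_mul • a

end Clique

/-- If [a], [b] form an edge of Γ(A), then u ↦ [a + u·b] is a bijection from
A^× onto the set of vertices [c] such that {[a],[b],[c]} is a 3-clique of Γ(A). -/
theorem stmt3 (A : Type*) [CommRing A] (a b : UnimodRow A)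
    (hab : (GammaGraph A).Adj ⟦a⟧ ⟦b⟧) :
    ∃ f : Aˣ → Vertex A,
      (∀ u : Aˣ, ∃ h : IsUnimod (a.1 + (u : A) • b.1),
        f u = ⟦(⟨a.1 + (u : A) • b.1, h⟩ : UnimodRow A)⟧) ∧
      Set.BijOn f Set.univ
        {c : Vertex A | (GammaGraph A).Adj ⟦a⟧ c ∧ (GammaGraph A).Adj ⟦b⟧ c} := by
  have := GammaGraph.nontrivial_of_adj hab
  have hδ := GammaGraph.isUnit_det2_of_adj hab
  have hac (u : Aˣ) : IsUnit (det2 a.1 (a.1 + (u : A) • b.1)) := by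
    rw [det2_add_smul_left]
    exact u.isUnit.mul hδ
  have hbc (u : Aˣ) : IsUnit (det2 b.1 (a.1 + (u : A) • b.1)) := by
    rw [det2_add_smul_right, det2_swap]
    exact hδ.neg
  let c (u : Aˣ) : UnimodRow A := ⟨a.1 + (u : A) • b.1, IsUnimod.of_isUnit_det2 (hac u)⟩
  refine ⟨fun u => ⟦c u⟧, fun u => ⟨_, rfl⟩, ?mapsTo, ?injOn, ?surjOn⟩
  case mapsTo =>
    exact fun u _ => ⟨GammaGraph.adj_of_isUnit_det2 (hac u), GammaGraph.adj_of_isUnit_det2 (hbc u)⟩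
  case injOn =>
    intro u _ u' _ h
    obtain ⟨w, hw⟩ := Quotient.exact h
    exact Units.ext (eq_of_smul_add_smul_eq hδ hw)
  case surjOn =>
    rintro ⟨d⟩ ⟨had, hbd⟩
    obtain ⟨u, w, hw⟩ := exists_smul_eq_add_smul hδ (GammaGraph.isUnit_det2_of_adj had)
      (GammaGraph.isUnit_det2_of_adj hbd)
    exact ⟨u, trivial, Quotient.sound (Setoid.symm ⟨w, hw⟩)⟩
end

section
/- Let A be a commutative ring. In the group C(A), with y(a) := ε(0)³ε(a) for a ∈ A, the following hold: (1) y(a)y(b) = y(a+b) for all a, b ∈ A; (2) h(u)⁻¹ y(a) h(u) = y(u²a) for every unit u of A and every a ∈ A. -/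
/-!
By relations (1) and (3), h(-1) is a central involution of C(A), and relation (2) with `a = 0`
reads ε(0)²ε(b) = h(-1)ε(b); together they absorb the middle ε(0) of y(a)y(b) = ε(0)³ε(a)ε(0)³ε(b).
By relation (3), conjugation by h(u) sends ε(a) to k ε(u²a) with k = h(u)⁻², and k ε(0) k = ε(0),
so in the conjugate (k ε(0))³ k ε(u²a) of y(a) the factors k cancel in pairs.
-/

open Matrix

/-- The word `h(u) = ε(-u)ε(-u⁻¹)ε(-u)` in the free group on the symbols `ε(a)`, `a ∈ A`. -/
def hFree {A : Type*} [CommRing A] (u : Aˣ) : FreeGroup A :=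
  FreeGroup.of (-(u : A)) * FreeGroup.of (-((u⁻¹ : Aˣ) : A)) * FreeGroup.of (-(u : A))

/-- The defining relations of Cohn's group C(A). -/
def CRels (A : Type*) [CommRing A] : Set (FreeGroup A) :=
  {x | ∃ u v : Aˣ, x = hFree u * hFree v * (hFree (u * v))⁻¹} ∪
  {x | ∃ a b : A, x = FreeGroup.of a * FreeGroup.of (0 : A) * FreeGroup.of b *
      (hFree (-1) * FreeGroup.of (a + b))⁻¹} ∪
  {x | ∃ (u : Aˣ) (a : A), x = hFree u * FreeGroup.of a * hFree u *
      (FreeGroup.of ((u : A) ^ 2 * a))⁻¹}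

/-- Cohn's group C(A), presented by generators ε(a), a ∈ A, and the three families of
relations h(u)h(v) = h(uv), ε(a)ε(0)ε(b) = h(-1)ε(a+b), h(u)ε(a)h(u) = ε(u²a). -/
abbrev CGroup (A : Type*) [CommRing A] := PresentedGroup (CRels A)

/-- The generator ε(a) of C(A). -/
def epsC {A : Type*} [CommRing A] (a : A) : CGroup A := PresentedGroup.of a

/-- h(u) = ε(-u)ε(-u⁻¹)ε(-u) in C(A). -/
def hC {A : Type*} [CommRing A] (u : Aˣ) : CGroup A :=
  epsC (-(u : A)) * epsC (-((u⁻¹ : Aˣ) : A)) * epsC (-(u : A))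

/-- y(a) = ε(0)³ε(a) in C(A). -/
def yC {A : Type*} [CommRing A] (a : A) : CGroup A := (epsC (0 : A)) ^ 3 * epsC a

/-- ȳ(a) = ε(-a)ε(0)³ in C(A). -/
def ybarC {A : Type*} [CommRing A] (a : A) : CGroup A := epsC (-a) * (epsC (0 : A)) ^ 3

/-- β(u,a) = h(u)y(ua) in C(A). -/
def betaC {A : Type*} [CommRing A] (u : Aˣ) (a : A) : CGroup A := hC u * yC ((u : A) * a)

/-- E(a) = [[a,1],[-1,0]] as an element of SL₂. -/
def ESL {A : Type*} [CommRing A] (a : A) : Matrix.SpecialLinearGroup (Fin 2) A :=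
  ⟨!![a, 1; -1, 0], by simp [Matrix.det_fin_two_of]⟩

/-- D(u) = diag(u, u⁻¹) as an element of SL₂. -/
def DSL {A : Type*} [CommRing A] (u : Aˣ) : Matrix.SpecialLinearGroup (Fin 2) A :=
  ⟨!![(u : A), 0; 0, ((u⁻¹ : Aˣ) : A)], by simp [Matrix.det_fin_two_of]⟩

theorem ESL_h {A : Type*} [CommRing A] (u : Aˣ) :
    ESL (-(u : A)) * ESL (-((u⁻¹ : Aˣ) : A)) * ESL (-(u : A)) = DSL u := by
  apply Subtype.ext
  show (!![-(u:A), 1; -1, 0] * !![-((u⁻¹:Aˣ):A), 1; -1, 0]) * !![-(u:A), 1; -1, 0] = _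
  ext i j
  fin_cases i <;> fin_cases j <;>
    simp [DSL, Matrix.mul_apply, Fin.sum_univ_two]

theorem DSL_mul {A : Type*} [CommRing A] (u v : Aˣ) : DSL u * DSL v = DSL (u * v) := by
  apply Subtype.ext
  show (!![(u:A), 0; 0, ((u⁻¹:Aˣ):A)] * !![(v:A), 0; 0, ((v⁻¹:Aˣ):A)]) = _
  ext i j
  fin_cases i <;> fin_cases j <;>
    simp [DSL, Matrix.mul_apply, Fin.sum_univ_two, mul_comm]

theorem ESL_rel2 {A : Type*} [CommRing A] (a b : A) :
    ESL a * ESL (0 : A) * ESL b = DSL (-1) * ESL (a + b) := by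
  apply Subtype.ext
  show (!![a, 1; -1, 0] * !![(0:A), 1; -1, 0]) * !![b, 1; -1, 0] =
    !![((-1 : Aˣ) : A), 0; 0, (((-1 : Aˣ)⁻¹ : Aˣ) : A)] * !![a + b, 1; -1, 0]
  ext i j
  fin_cases i <;> fin_cases j <;>
    simp [DSL, ESL, Matrix.mul_apply, Fin.sum_univ_two]

theorem ESL_rel3 {A : Type*} [CommRing A] (u : Aˣ) (a : A) :
    DSL u * ESL a * DSL u = ESL ((u : A) ^ 2 * a) := by
  apply Subtype.ext
  show (!![(u:A), 0; 0, ((u⁻¹:Aˣ):A)] * !![a, 1; -1, 0]) * !![(u:A), 0; 0, ((u⁻¹:Aˣ):A)] = _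
  ext i j
  fin_cases i <;> fin_cases j <;>
    simp [ESL, Matrix.mul_apply, Fin.sum_univ_two] <;> ring

theorem lift_hFree {A : Type*} [CommRing A] (u : Aˣ) :
    FreeGroup.lift (fun a : A => ESL a) (hFree u) = DSL u := by
  simp only [hFree, _root_.map_mul, FreeGroup.lift_apply_of]
  exact ESL_h u

theorem CRels_liftable {A : Type*} [CommRing A] :
    ∀ r ∈ CRels A, FreeGroup.lift (fun a : A => ESL a) r = 1 := by
  rintro r ((⟨u, v, rfl⟩ | ⟨a, b, rfl⟩) | ⟨u, a, rfl⟩)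
  · rw [_root_.map_mul, _root_.map_mul, map_inv, lift_hFree, lift_hFree, lift_hFree, DSL_mul,
      mul_inv_cancel]
  · simp only [_root_.map_mul, map_inv, FreeGroup.lift_apply_of, lift_hFree]
    rw [ESL_rel2, mul_inv_cancel]
  · simp only [_root_.map_mul, map_inv, FreeGroup.lift_apply_of, lift_hFree]
    rw [ESL_rel3, mul_inv_cancel]

/-- The homomorphism ψ : C(A) → SL₂(A) with ψ(ε(a)) = E(a). -/
def psiC (A : Type*) [CommRing A] : CGroup A →* Matrix.SpecialLinearGroup (Fin 2) A :=
  PresentedGroup.toGroup CRels_liftable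

@[simp] theorem psiC_epsC {A : Type*} [CommRing A] (a : A) : psiC A (epsC a) = ESL a :=
  PresentedGroup.toGroup.of _

theorem pow_three_mul_of_mul_mul_eq {M : Type*} [Monoid M] {k x : M} (h : k * x * k = x) :
    (k * x) ^ 3 * k = x ^ 3 := by
  calc (k * x) ^ 3 * k = (k * x * k) * x * (k * x * k) := by
        simp only [pow_succ, pow_zero, one_mul, mul_assoc]
    _ = x ^ 3 := by rw [h, pow_succ, sq]

theorem inv_mul_mul_inv_of_mul_mul_eq {G : Type*} [Group G] {g x : G} (h : g * x * g = x) :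
    g⁻¹ * x * g⁻¹ = x := by
  calc g⁻¹ * x * g⁻¹ = g⁻¹ * (g * x * g) * g⁻¹ := by rw [h]
    _ = x := by group

section CohnGroup

variable {A : Type*} [CommRing A]

theorem mk_hFree (u : Aˣ) : PresentedGroup.mk (CRels A) (hFree u) = hC u := by
  simp only [hFree, map_mul]
  rfl

theorem hC_mul (u v : Aˣ) : hC u * hC v = hC (u * v) := by
  have h := PresentedGroup.mk_eq_mk_of_mul_inv_mem
    (show _ ∈ CRels A from Or.inl (Or.inl ⟨u, v, rfl⟩))
  rwa [map_mul, mk_hFree, mk_hFree, mk_hFree] at h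

theorem epsC_mul_epsC_zero_mul_epsC (a b : A) :
    epsC a * epsC 0 * epsC b = hC (-1) * epsC (a + b) := by
  have h := PresentedGroup.mk_eq_mk_of_mul_inv_mem
    (show _ ∈ CRels A from Or.inl (Or.inr ⟨a, b, rfl⟩))
  rwa [map_mul, map_mul, map_mul, mk_hFree] at h

theorem hC_mul_epsC_mul_hC (u : Aˣ) (a : A) :
    hC u * epsC a * hC u = epsC ((u : A) ^ 2 * a) := by
  have h := PresentedGroup.mk_eq_mk_of_mul_inv_mem
    (show _ ∈ CRels A from Or.inr ⟨u, a, rfl⟩)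
  rwa [map_mul, map_mul, mk_hFree] at h

theorem hC_one : hC (1 : Aˣ) = 1 :=
  mul_eq_left.mp ((hC_mul 1 1).trans (congrArg hC (mul_one 1)))

theorem hC_neg_one_mul_self : hC (-1 : Aˣ) * hC (-1) = 1 := by
  rw [hC_mul, neg_one_mul, neg_neg, hC_one]

theorem commute_hC_neg_one_epsC (a : A) : Commute (hC (-1)) (epsC a) := by
  have h : hC (-1) * epsC a * hC (-1) = epsC a := by
    rw [hC_mul_epsC_mul_hC]
    norm_num
  calc hC (-1) * epsC a = hC (-1) * epsC a * (hC (-1) * hC (-1)) := by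
        rw [hC_neg_one_mul_self, mul_one]
    _ = epsC a * hC (-1) := by rw [← mul_assoc, h]

theorem yC_mul_yC (a b : A) : yC a * yC b = yC (a + b) := by
  have e0b : epsC 0 * epsC 0 * epsC b = hC (-1) * epsC b := by
    rw [epsC_mul_epsC_zero_mul_epsC, zero_add]
  calc yC a * yC b = epsC 0 ^ 3 * epsC a * epsC 0 * (epsC 0 * epsC 0 * epsC b) := by
        simp only [yC, pow_succ, pow_zero, one_mul, mul_assoc]
    _ = epsC 0 ^ 3 * (epsC a * epsC 0 * epsC b) * hC (-1) := by
        rw [e0b, (commute_hC_neg_one_epsC b).eq]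
        simp only [mul_assoc]
    _ = epsC 0 ^ 3 * epsC (a + b) * (hC (-1) * hC (-1)) := by
        rw [epsC_mul_epsC_zero_mul_epsC, (commute_hC_neg_one_epsC (a + b)).eq]
        simp only [mul_assoc]
    _ = yC (a + b) := by rw [hC_neg_one_mul_self, mul_one, yC]

theorem inv_hC_mul_epsC_mul_hC (u : Aˣ) (a : A) :
    (hC u)⁻¹ * epsC a * hC u = (hC u)⁻¹ ^ 2 * epsC ((u : A) ^ 2 * a) := by
  rw [← hC_mul_epsC_mul_hC]
  group

theorem inv_hC_mul_yC_mul_hC (u : Aˣ) (a : A) :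
    (hC u)⁻¹ * yC a * hC u = yC ((u : A) ^ 2 * a) := by
  set k := (hC u)⁻¹ ^ 2
  have hk : k * epsC 0 * k = epsC 0 := by
    have h := inv_mul_mul_inv_of_mul_mul_eq
      ((hC_mul_epsC_mul_hC u 0).trans (congrArg epsC (mul_zero _)))
    calc k * epsC 0 * k = (hC u)⁻¹ * ((hC u)⁻¹ * epsC 0 * (hC u)⁻¹) * (hC u)⁻¹ := by
          simp only [k, sq, mul_assoc]
      _ = epsC 0 := by rw [h, h]
  calc (hC u)⁻¹ * yC a * hC u = MulAut.conj (hC u)⁻¹ (yC a) := by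
        rw [MulAut.conj_apply, inv_inv]
    _ = (k * epsC 0) ^ 3 * k * epsC ((u : A) ^ 2 * a) := by
        simp only [yC, map_mul, map_pow, MulAut.conj_apply, inv_inv]
        rw [inv_hC_mul_epsC_mul_hC, inv_hC_mul_epsC_mul_hC, mul_zero, mul_assoc]
    _ = yC ((u : A) ^ 2 * a) := by rw [pow_three_mul_of_mul_mul_eq hk, yC]

end CohnGroup

/-- In C(A): y(a)y(b) = y(a+b), and h(u)⁻¹ y(a) h(u) = y(u²a). -/
theorem stmt11 (A : Type*) [CommRing A] :
    (∀ a b : A, yC a * yC b = yC (a + b)) ∧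
    (∀ (u : Aˣ) (a : A), (hC u)⁻¹ * yC a * hC u = yC ((u : A) ^ 2 * a)) :=
  ⟨yC_mul_yC, inv_hC_mul_yC_mul_hC⟩
end
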